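/- arXiv:1303.1043 — 3 statements merged into one kernel-verified Lean document; each statement's English description precedes it below -/
import Mathlib

section
/- The formal power series B0(T) = Σ_{m≥0} (6m)!/((2m)!(3m)!) (−T)^m and B1(T) = Σ_{m≥0} ((1+6m)/(1−6m)) (6m)!/((2m)!(3m)!) (−T)^m satisfy the identity B0(T)·B1(−T) + B0(−T)·B1(T) = 2 in ℚ[[T]]. -/
open PowerSeries

/-- The coefficient of `T^m` in the Faber–Zagier series `B0`. -/
noncomputable def b0coeff (m : ℕ) : ℚ :=
  (-1) ^ m * (Nat.factorial (6 * m) : ℚ) /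
    ((Nat.factorial (2 * m) : ℚ) * (Nat.factorial (3 * m) : ℚ))

/-- The coefficient of `T^m` in the Faber–Zagier series `B1`. -/
noncomputable def b1coeff (m : ℕ) : ℚ :=
  (-1) ^ m * ((1 + 6 * (m : ℚ)) / (1 - 6 * (m : ℚ))) * (Nat.factorial (6 * m) : ℚ) /
    ((Nat.factorial (2 * m) : ℚ) * (Nat.factorial (3 * m) : ℚ))

noncomputable def B0 : PowerSeries ℚ := PowerSeries.mk b0coeff

noncomputable def B1 : PowerSeries ℚ := PowerSeries.mk b1coeff

/-- `B0(-T)`. -/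
noncomputable def B0neg : PowerSeries ℚ := PowerSeries.mk fun m => (-1) ^ m * b0coeff m

/-- `B1(-T)`. -/
noncomputable def B1neg : PowerSeries ℚ := PowerSeries.mk fun m => (-1) ^ m * b1coeff m

/-!
Substituting `T ↦ -T` exchanges `B0(T) B1(-T)` and `B0(-T) B1(T)`, so the odd coefficients of the
sum cancel and the even ones are twice those of `B0(T) B1(-T)`, namely
`S n = ∑_{i+j=n} (-1)^i A i A j c j` with `A m = (6m)!/((2m)!(3m)!)` and `c j = (1+6j)/(1-6j)`.
Creative telescoping (Zeilberger's algorithm) gives the recurrence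
`(n+1) S(n+2) = 20736 n (3n+2)(3n+4) S(n)`; starting from `S 0 = 1`, the factor `n` makes every
`S (2k+2)` vanish.
-/

namespace FaberZagier

noncomputable def A (m : ℕ) : ℚ :=
  (Nat.factorial (6 * m) : ℚ) / ((Nat.factorial (2 * m) : ℚ) * (Nat.factorial (3 * m) : ℚ))

noncomputable def c (m : ℕ) : ℚ := (1 + 6 * (m : ℚ)) / (1 - 6 * (m : ℚ))

noncomputable def summand (i j : ℕ) : ℚ := (-1) ^ i * A i * A j * c j

noncomputable def S (n : ℕ) : ℚ := ∑ i ∈ Finset.range (n + 1), summand i (n - i)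

def ρ (n : ℕ) : ℚ := 20736 * n * (3 * n + 2) * (3 * n + 4)

/-- Zeilberger's certificate: the summands of `(n + 1) S (n + 2) - ρ n S n` are its differences
in `i`. -/
noncomputable def cert (n i : ℕ) : ℚ :=
  i * (-36 * (n + 1) * i ^ 2 + 12 * (3 * n + 4) ^ 2 * i - (72 * n ^ 3 + 324 * n ^ 2 + 487 * n + 247))
    / ((n + 2) * (6 * n - 6 * i + 5) * (6 * n - 6 * i + 11)) * (-1) ^ i * A i * A (n + 2 - i)

lemma A_zero : A 0 = 1 := by norm_num [A]

lemma A_one : A 1 = 60 := by norm_num [A, Nat.factorial]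

lemma A_succ (m : ℕ) : A (m + 1) = 12 * (6 * m + 1) * (6 * m + 5) / (m + 1) * A m := by
  rw [A, A, show 6 * (m + 1) = 6 * m + 6 by ring, show 2 * (m + 1) = 2 * m + 2 by ring,
    show 3 * (m + 1) = 3 * m + 3 by ring]
  simp only [Nat.factorial_succ]
  push_cast
  field_simp
  ring

lemma A_two_add (m : ℕ) :
    A (m + 2) = 12 * (6 * m + 7) * (6 * m + 11) / (m + 2) * A (m + 1) := by
  rw [A_succ (m + 1)]
  push_cast
  ring

lemma one_sub_six_mul_ne_zero (j : ℕ) : (1 - 6 * j : ℚ) ≠ 0 := by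
  have h : (1 : ℚ) ≠ ((6 * j : ℕ) : ℚ) := by exact_mod_cast (by omega : 1 ≠ 6 * j)
  push_cast at h
  exact sub_ne_zero.mpr h

lemma summand_step {n i : ℕ} (hin : i ≤ n) :
    (n + 1 : ℚ) * summand i (n + 2 - i) - ρ n * summand i (n - i)
      = cert n (i + 1) - cert n i := by
  obtain ⟨j, rfl⟩ := Nat.exists_eq_add_of_le hin
  have hj : (1 - j * 6 : ℚ) ≠ 0 := by
    have := one_sub_six_mul_ne_zero j; contrapose! this; linarith
  have hj' : (j * 6 - 1 : ℚ) ≠ 0 := by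
    have := one_sub_six_mul_ne_zero j; contrapose! this; linarith
  have hj₂ := one_sub_six_mul_ne_zero (j + 2)
  simp only [cert, summand, c, ρ, show i + j + 2 - i = j + 2 by omega,
    show i + j + 2 - (i + 1) = j + 1 by omega, Nat.add_sub_cancel_left, A_two_add, A_succ]
  push_cast at hj₂ ⊢
  rw [show (6 * (i + j : ℚ) - 6 * (i + 1) + 5) = 6 * j - 1 by ring,
    show (6 * (i + j : ℚ) - 6 * (i + 1) + 11) = 6 * j + 5 by ring,
    show (6 * (i + j : ℚ) - 6 * i + 5) = 6 * j + 5 by ring,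
    show (6 * (i + j : ℚ) - 6 * i + 11) = 6 * j + 11 by ring, pow_succ (-1 : ℚ) i]
  field_simp
  ring

lemma summand_boundary_one (n : ℕ) :
    (n + 1 : ℚ) * summand (n + 1) 1 = cert n (n + 2) - cert n (n + 1) := by
  simp only [cert, summand, c, Nat.sub_self, show n + 2 - (n + 1) = 1 by omega, A_zero, A_one,
    A_two_add, pow_succ (-1 : ℚ)]
  push_cast
  field_simp
  ring

lemma summand_boundary_zero (n : ℕ) : (n + 1 : ℚ) * summand (n + 2) 0 = -cert n (n + 2) := by
  simp only [cert, summand, c, Nat.sub_self, A_zero, A_two_add, pow_succ (-1 : ℚ)]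
  push_cast
  field_simp
  ring

lemma cert_zero (n : ℕ) : cert n 0 = 0 := by simp [cert]

lemma S_recurrence (n : ℕ) : (n + 1 : ℚ) * S (n + 2) = ρ n * S n := by
  have htelescope : ∑ i ∈ Finset.range (n + 1),
      ((n + 1 : ℚ) * summand i (n + 2 - i) - ρ n * summand i (n - i)) = cert n (n + 1) := by
    rw [Finset.sum_congr rfl fun i hi => summand_step (Finset.mem_range_succ_iff.mp hi),
      Finset.sum_range_sub, cert_zero, sub_zero]
  rw [Finset.sum_sub_distrib, ← Finset.mul_sum, ← Finset.mul_sum] at htelescope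
  rw [S, S, Finset.sum_range_succ, Finset.sum_range_succ, Nat.sub_self,
    show n + 2 - (n + 1) = 1 by omega]
  linear_combination htelescope + summand_boundary_one n + summand_boundary_zero n

lemma S_zero : S 0 = 1 := by simp [S, summand, A_zero, c]

lemma S_even_succ (k : ℕ) : S (2 * k + 2) = 0 := by
  induction k with
  | zero => simpa [ρ] using S_recurrence 0
  | succ k ih =>
    have h := S_recurrence (2 * k + 2)
    rw [ih, mul_zero] at h
    exact (mul_eq_zero.mp h).resolve_left (by positivity)

lemma one_add_neg_one_pow_mul_S (n : ℕ) : (1 + (-1) ^ n) * S n = if n = 0 then 2 else 0 := by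
  obtain ⟨k, rfl | rfl⟩ := Nat.even_or_odd' n
  · rcases k with _ | k
    · norm_num [S_zero]
    · rw [show 2 * (k + 1) = 2 * k + 2 by ring, S_even_succ]
      simp
  · simp [pow_succ, pow_mul]

lemma b0coeff_mul_neg_one_pow_mul_b1coeff (i j : ℕ) :
    b0coeff i * ((-1) ^ j * b1coeff j) = summand i j := by
  have hsq : ((-1 : ℚ) ^ j) * (-1) ^ j = 1 := by rw [← mul_pow]; norm_num
  have hb0 : b0coeff i = (-1) ^ i * A i := by rw [b0coeff, A]; ring
  have hb1 : b1coeff j = (-1) ^ j * c j * A j := by rw [b1coeff, A, c]; ring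
  rw [hb0, hb1, summand]
  linear_combination ((-1) ^ i * A i * A j * c j) * hsq

lemma coeff_B0_mul_B1neg (n : ℕ) : coeff n (B0 * B1neg) = S n := by
  rw [coeff_mul, Finset.Nat.sum_antidiagonal_eq_sum_range_succ_mk, S]
  simp only [B0, B1neg, coeff_mk, b0coeff_mul_neg_one_pow_mul_b1coeff]

lemma rescale_neg_one_B0 : rescale (-1) B0 = B0neg := by
  ext n
  simp [B0, B0neg]

lemma rescale_neg_one_B1neg : rescale (-1) B1neg = B1 := by
  ext n
  simp [B1, B1neg, ← mul_assoc, ← mul_pow]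

lemma B0neg_mul_B1 : B0neg * B1 = rescale (-1) (B0 * B1neg) := by
  rw [map_mul, rescale_neg_one_B0, rescale_neg_one_B1neg]

end FaberZagier

lemma PowerSeries.coeff_add_rescale_neg_one {R : Type*} [CommRing R] (f : R⟦X⟧) (n : ℕ) :
    coeff n (f + rescale (-1) f) = (1 + (-1) ^ n) * coeff n f := by
  simp [add_mul]

open FaberZagier in
theorem B0_mul_B1neg_add_B0neg_mul_B1 : B0 * B1neg + B0neg * B1 = 2 := by
  ext n
  rw [B0neg_mul_B1, coeff_add_rescale_neg_one, coeff_B0_mul_B1neg, one_add_neg_one_pow_mul_S,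
    ← map_ofNat C 2, coeff_C]
end

section
/- The quotient Δ(Z,W) = (ζ' + ζ'' − B0(ζ'Z)ζ''B1(ζ''W) − ζ'B1(ζ'Z)B0(ζ''W))/(Z+W) has constant term 60ζ'ζ'' − 84 and linear term 32760(ζ'Z + ζ''W) − 27720(ζ'W + ζ''Z). -/
open MvPowerSeries

section

variable (A : Type) [CommRing A] [Algebra ℚ A] (z₁ z₂ : A)

/-- `B0(ζ'Z)` as a two-variable power series (`Z` is the variable `0`, `W` is `1`). -/
noncomputable def B0Z : MvPowerSeries (Fin 2) A :=
  fun e => if e 1 = 0 then z₁ ^ (e 0) • algebraMap ℚ A (b0coeff (e 0)) else 0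

/-- `B1(ζ'Z)`. -/
noncomputable def B1Z : MvPowerSeries (Fin 2) A :=
  fun e => if e 1 = 0 then z₁ ^ (e 0) • algebraMap ℚ A (b1coeff (e 0)) else 0

/-- `B0(ζ''W)`. -/
noncomputable def B0W : MvPowerSeries (Fin 2) A :=
  fun e => if e 0 = 0 then z₂ ^ (e 1) • algebraMap ℚ A (b0coeff (e 1)) else 0

/-- `B1(ζ''W)`. -/
noncomputable def B1W : MvPowerSeries (Fin 2) A :=
  fun e => if e 0 = 0 then z₂ ^ (e 1) • algebraMap ℚ A (b1coeff (e 1)) else 0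

/-- The numerator `ζ' + ζ'' − B0(ζ'Z)·ζ''·B1(ζ''W) − ζ'·B1(ζ'Z)·B0(ζ''W)`. -/
noncomputable def edgeNumerator : MvPowerSeries (Fin 2) A :=
  (MvPowerSeries.C : A →+* MvPowerSeries (Fin 2) A) (z₁ + z₂)
    - B0Z A z₁ * (MvPowerSeries.C : A →+* MvPowerSeries (Fin 2) A) z₂ * B1W A z₂
    - (MvPowerSeries.C : A →+* MvPowerSeries (Fin 2) A) z₁ * B1Z A z₁ * B0W A z₂

end

/-! Since `W · Q` has no pure powers of `Z`, the coefficient of `Z^(n+1)` in `(Z + W) Q` is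
that of `Z^n` in `Q`. So the coefficients of `Q` on the `Z`-axis are those of the numerator at
`W = 0`, namely `ζ' + ζ'' − ζ''B0(ζ'Z) − ζ'B1(ζ'Z)`, shifted by one; symmetrically on the
`W`-axis. The claim then only involves the first three Faber–Zagier coefficients and
`ζ'^2 = ζ''^2 = 1`. -/

namespace MvPowerSeries

variable {σ R : Type*} [CommSemiring R]

theorem coeff_single_mul_of_coeff_single_eq_zero (s : σ) (n : ℕ) (f : MvPowerSeries σ R)
    {g : MvPowerSeries σ R} (hg : ∀ j ≠ 0, coeff (Finsupp.single s j) g = 0) :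
    coeff (Finsupp.single s n) (f * g) = coeff (Finsupp.single s n) f * constantCoeff g := by
  classical
  rw [coeff_mul, Finsupp.antidiagonal_single, Finset.sum_map, Finset.sum_eq_single (n, 0)]
  · simp [coeff_zero_eq_constantCoeff]
  · rintro ⟨i, j⟩ hij hne
    have hj : j ≠ 0 := by
      rintro rfl
      simp_all
    simp [hg j hj]
  · simp

theorem coeff_single_succ_X_add_X_mul {s t : σ} (hst : s ≠ t) (n : ℕ)
    (Q : MvPowerSeries σ R) :
    coeff (Finsupp.single s (n + 1)) ((X s + X t) * Q) = coeff (Finsupp.single s n) Q := by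
  classical
  have hXt : ∀ j ≠ 0, coeff (Finsupp.single s j) (X t : MvPowerSeries σ R) = 0 :=
    fun _ _ => by simp [coeff_X, Finsupp.single_eq_single_iff, hst]
  rw [add_mul, map_add, mul_comm (X t), coeff_single_mul_of_coeff_single_eq_zero s _ Q hXt,
    constantCoeff_X, mul_zero, add_zero, X_def, add_comm n, Finsupp.single_add,
    coeff_add_monomial_mul, one_mul]

end MvPowerSeries

theorem b0coeff_zero : b0coeff 0 = 1 := by norm_num [b0coeff]
theorem b0coeff_one : b0coeff 1 = -60 := by norm_num [b0coeff, Nat.factorial]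
theorem b0coeff_two : b0coeff 2 = 27720 := by norm_num [b0coeff, Nat.factorial]
theorem b1coeff_zero : b1coeff 0 = 1 := by norm_num [b1coeff]
theorem b1coeff_one : b1coeff 1 = 84 := by norm_num [b1coeff, Nat.factorial]
theorem b1coeff_two : b1coeff 2 = -32760 := by norm_num [b1coeff, Nat.factorial]

section FaberZagierSeries

variable {A : Type} [CommRing A] [Algebra ℚ A] (z : A) {n : ℕ}

open Finsupp

theorem coeff_single_zero_B0Z :
    coeff (single 0 n) (B0Z A z) = z ^ n * algebraMap ℚ A (b0coeff n) := by
  simp [B0Z, coeff_apply]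

theorem coeff_single_zero_B1Z :
    coeff (single 0 n) (B1Z A z) = z ^ n * algebraMap ℚ A (b1coeff n) := by
  simp [B1Z, coeff_apply]

theorem coeff_single_one_B0W :
    coeff (single 1 n) (B0W A z) = z ^ n * algebraMap ℚ A (b0coeff n) := by
  simp [B0W, coeff_apply]

theorem coeff_single_one_B1W :
    coeff (single 1 n) (B1W A z) = z ^ n * algebraMap ℚ A (b1coeff n) := by
  simp [B1W, coeff_apply]

theorem coeff_single_one_B0Z (hn : n ≠ 0) : coeff (single 1 n) (B0Z A z) = 0 := by
  simp [B0Z, coeff_apply, hn]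

theorem coeff_single_one_B1Z (hn : n ≠ 0) : coeff (single 1 n) (B1Z A z) = 0 := by
  simp [B1Z, coeff_apply, hn]

theorem coeff_single_zero_B0W (hn : n ≠ 0) : coeff (single 0 n) (B0W A z) = 0 := by
  simp [B0W, coeff_apply, hn]

theorem coeff_single_zero_B1W (hn : n ≠ 0) : coeff (single 0 n) (B1W A z) = 0 := by
  simp [B1W, coeff_apply, hn]

theorem constantCoeff_B0Z : constantCoeff (B0Z A z) = 1 := by
  simp [B0Z, ← coeff_zero_eq_constantCoeff_apply, coeff_apply, b0coeff_zero]

theorem constantCoeff_B1Z : constantCoeff (B1Z A z) = 1 := by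
  simp [B1Z, ← coeff_zero_eq_constantCoeff_apply, coeff_apply, b1coeff_zero]

theorem constantCoeff_B0W : constantCoeff (B0W A z) = 1 := by
  simp [B0W, ← coeff_zero_eq_constantCoeff_apply, coeff_apply, b0coeff_zero]

theorem constantCoeff_B1W : constantCoeff (B1W A z) = 1 := by
  simp [B1W, ← coeff_zero_eq_constantCoeff_apply, coeff_apply, b1coeff_zero]

end FaberZagierSeries

section EdgeNumerator

variable {A : Type} [CommRing A] [Algebra ℚ A] (z₁ z₂ : A) {n : ℕ}

open Finsupp

theorem edgeNumerator_eq : edgeNumerator A z₁ z₂ =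
    C (z₁ + z₂) - C z₂ * (B0Z A z₁ * B1W A z₂) - C z₁ * (B1Z A z₁ * B0W A z₂) := by
  rw [edgeNumerator]
  ring

theorem coeff_single_zero_edgeNumerator (hn : n ≠ 0) :
    coeff (single 0 n) (edgeNumerator A z₁ z₂) =
      -(z₁ ^ n * algebraMap ℚ A (b0coeff n) * z₂ +
        z₁ ^ (n + 1) * algebraMap ℚ A (b1coeff n)) := by
  rw [edgeNumerator_eq, map_sub, map_sub, coeff_C, if_neg (by simpa), coeff_C_mul, coeff_C_mul,
    coeff_single_mul_of_coeff_single_eq_zero _ _ _ fun _ => coeff_single_zero_B1W z₂,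
    coeff_single_mul_of_coeff_single_eq_zero _ _ _ fun _ => coeff_single_zero_B0W z₂,
    coeff_single_zero_B0Z, coeff_single_zero_B1Z, constantCoeff_B0W, constantCoeff_B1W]
  ring

theorem coeff_single_one_edgeNumerator (hn : n ≠ 0) :
    coeff (single 1 n) (edgeNumerator A z₁ z₂) =
      -(z₂ ^ (n + 1) * algebraMap ℚ A (b1coeff n) +
        z₁ * z₂ ^ n * algebraMap ℚ A (b0coeff n)) := by
  rw [edgeNumerator_eq, map_sub, map_sub, coeff_C, if_neg (by simpa), coeff_C_mul, coeff_C_mul,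
    mul_comm (B0Z A z₁), mul_comm (B1Z A z₁),
    coeff_single_mul_of_coeff_single_eq_zero _ _ _ fun _ => coeff_single_one_B0Z z₁,
    coeff_single_mul_of_coeff_single_eq_zero _ _ _ fun _ => coeff_single_one_B1Z z₁,
    coeff_single_one_B0W, coeff_single_one_B1W, constantCoeff_B0Z, constantCoeff_B1Z]
  ring

end EdgeNumerator

theorem edgeQuotient_low_coeffs (A : Type) [CommRing A] [Algebra ℚ A] (z₁ z₂ : A)
    (h₁ : z₁ ^ 2 = 1) (h₂ : z₂ ^ 2 = 1) (Q : MvPowerSeries (Fin 2) A)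
    (hQ : (MvPowerSeries.X (0 : Fin 2) + MvPowerSeries.X (1 : Fin 2)) * Q
      = edgeNumerator A z₁ z₂) :
    MvPowerSeries.coeff 0 Q = 60 * (z₁ * z₂) - 84 ∧
    MvPowerSeries.coeff (Finsupp.single (0 : Fin 2) 1) Q = 32760 * z₁ - 27720 * z₂ ∧
    MvPowerSeries.coeff (Finsupp.single (1 : Fin 2) 1) Q = 32760 * z₂ - 27720 * z₁ := by
  have hZ (n : ℕ) : coeff (Finsupp.single 0 n) Q =
      coeff (Finsupp.single 0 (n + 1)) (edgeNumerator A z₁ z₂) := by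
    rw [← hQ, coeff_single_succ_X_add_X_mul (by decide)]
  have hW (n : ℕ) : coeff (Finsupp.single 1 n) Q =
      coeff (Finsupp.single 1 (n + 1)) (edgeNumerator A z₁ z₂) := by
    rw [← hQ, add_comm (X 0), coeff_single_succ_X_add_X_mul (by decide)]
  refine ⟨?_, ?_, ?_⟩
  · rw [← Finsupp.single_zero (0 : Fin 2), hZ, zero_add,
      coeff_single_zero_edgeNumerator _ _ one_ne_zero]
    simp only [b0coeff_one, b1coeff_one, map_neg, map_ofNat]
    linear_combination (-84 : A) * h₁
  · rw [hZ, coeff_single_zero_edgeNumerator _ _ two_ne_zero]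
    simp only [b0coeff_two, b1coeff_two, map_neg, map_ofNat]
    linear_combination (32760 * z₁ - 27720 * z₂) * h₁
  · rw [hW, coeff_single_one_edgeNumerator _ _ two_ne_zero]
    simp only [b0coeff_two, b1coeff_two, map_neg, map_ofNat]
    linear_combination (32760 * z₂ - 27720 * z₁) * h₂
end

section
/- Let V be a 2-dimensional ℚ-vector space with symmetric bilinear form given in a basis (e_x, e_y) by η(e_x,e_x)=0, η(e_x,e_y)=1, η(e_y,e_y)=0. Let R(z) be the End(V)-valued power series with matrix entries R(z) = [[B1^even(cz), −B1^odd(cz)],[−B0^odd(cz), B0^even(cz)]] for a fixed nonzero scalar c. Then R satisfies the symplectic condition R(z)·R*(−z) = 1, where R* is the adjoint with respect to η. -/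
open PowerSeries Matrix

/-- `B0^even(c z)` as a power series in `z`. -/
noncomputable def B0evenC (c : ℚ) : PowerSeries ℚ :=
  PowerSeries.mk fun m => if Even m then b0coeff m * c ^ m else 0

/-- `B0^odd(c z)`. -/
noncomputable def B0oddC (c : ℚ) : PowerSeries ℚ :=
  PowerSeries.mk fun m => if ¬ Even m then b0coeff m * c ^ m else 0

/-- `B1^even(c z)`. -/
noncomputable def B1evenC (c : ℚ) : PowerSeries ℚ :=
  PowerSeries.mk fun m => if Even m then b1coeff m * c ^ m else 0

/-- `B1^odd(c z)`. -/
noncomputable def B1oddC (c : ℚ) : PowerSeries ℚ :=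
  PowerSeries.mk fun m => if ¬ Even m then b1coeff m * c ^ m else 0

/-- The `R`-matrix `R(z)`, as a `2×2` matrix of power series in `z`. -/
noncomputable def Rmat (c : ℚ) : Matrix (Fin 2) (Fin 2) (PowerSeries ℚ) :=
  !![B1evenC c, -B1oddC c; -B0oddC c, B0evenC c]

/-- `R(-z)`: even parts are unchanged, odd parts change sign. -/
noncomputable def RmatNeg (c : ℚ) : Matrix (Fin 2) (Fin 2) (PowerSeries ℚ) :=
  !![B1evenC c, B1oddC c; B0oddC c, B0evenC c]

/-- The form `η = [[0,1],[1,0]]`, with entries regarded as constant power series. -/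
noncomputable def etaMat : Matrix (Fin 2) (Fin 2) (PowerSeries ℚ) := !![0, 1; 1, 0]

section

variable {R : Type*} [CommRing R]

theorem coeff_succ_X_sq_mul_derivative (f : R⟦X⟧) (m : ℕ) :
    coeff (m + 1) (X ^ 2 * d⁄dX R f) = m * coeff m f := by
  rcases m with _ | m
  · simp [coeff_X_pow_mul']
  · rw [coeff_X_pow_mul', if_pos (by omega), show m + 1 + 1 - 2 = m by omega, coeff_derivative]
    push_cast
    ring

theorem C_mul_X_sq_mul_derivative_mk_ite (p q : ℕ → Prop) [DecidablePred p] [DecidablePred q]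
    (hqp : ∀ m, q (m + 1) ↔ p m) {P Q : ℕ → R} {κ μ : R} (h0 : Q 0 = P 0)
    (h : ∀ m, Q (m + 1) - P (m + 1) = (κ * m + μ) * P m) :
    C κ * (X ^ 2 * d⁄dX R (mk fun m => if p m then P m else 0)) =
      (mk fun m => if q m then Q m else 0) - (mk fun m => if q m then P m else 0) -
        C μ * X * mk fun m => if p m then P m else 0 := by
  ext (_ | m)
  · simp [coeff_X_pow_mul', h0]
  · rw [coeff_C_mul, coeff_succ_X_sq_mul_derivative, map_sub, mul_assoc, coeff_C_mul,
      coeff_succ_X_mul]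
    simp only [map_sub, coeff_mk, hqp]
    split_ifs
    · linear_combination -(h m)
    · ring

theorem derivative_mul_sub_mul_eq_zero [IsDomain R] {κ μ : R} (hκ : κ ≠ 0)
    {Fe Fo Ge Go : R⟦X⟧}
    (hFe : C κ * (X ^ 2 * d⁄dX R Fe) = Go - Fo - C μ * X * Fe)
    (hFo : C κ * (X ^ 2 * d⁄dX R Fo) = Ge - Fe - C μ * X * Fo)
    (hGe : C κ * (X ^ 2 * d⁄dX R Ge) = Fo - Go - C (-μ) * X * Ge)
    (hGo : C κ * (X ^ 2 * d⁄dX R Go) = Fe - Ge - C (-μ) * X * Go) :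
    d⁄dX R (Ge * Fe - Go * Fo) = 0 := by
  have h : C κ * X ^ 2 * d⁄dX R (Ge * Fe - Go * Fo) = 0 := by
    simp only [map_sub, Derivation.leibniz, smul_eq_mul, map_neg] at hGe hGo ⊢
    linear_combination Ge * hFe + Fe * hGe - Go * hFo - Fo * hGo
  exact (mul_eq_zero.mp h).resolve_left
    (mul_ne_zero ((map_ne_zero_iff _ C_injective).mpr hκ) (pow_ne_zero 2 X_ne_zero))

end

theorem succ_mul_b0coeff_succ (m : ℕ) :
    ((m : ℚ) + 1) * b0coeff (m + 1) = -12 * (6 * m + 1) * (6 * m + 5) * b0coeff m := by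
  have h6 : 6 * (m + 1) = 6 * m + 5 + 1 := by ring
  have h3 : 3 * (m + 1) = 3 * m + 2 + 1 := by ring
  have h2 : 2 * (m + 1) = 2 * m + 1 + 1 := by ring
  simp only [b0coeff, h6, h3, h2, Nat.factorial_succ]
  push_cast
  field_simp
  ring

theorem one_sub_mul_b1coeff (m : ℕ) :
    (1 - 6 * (m : ℚ)) * b1coeff m = (1 + 6 * m) * b0coeff m := by
  have : (1 - 6 * (m : ℚ)) ≠ 0 := by
    intro h
    have : (1 : ℤ) - 6 * m = 0 := by exact_mod_cast h
    omega
  simp only [b0coeff, b1coeff]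
  field_simp

theorem b1coeff_succ_sub_b0coeff_succ (m : ℕ) :
    b1coeff (m + 1) - b0coeff (m + 1) = 144 * (6 * m + 1) * b0coeff m := by
  have h1 := one_sub_mul_b1coeff (m + 1)
  have h2 := succ_mul_b0coeff_succ m
  push_cast at h1
  refine mul_left_cancel₀ (by positivity : ((6 * m + 5) * (m + 1) : ℚ) ≠ 0) ?_
  linear_combination -(m + 1 : ℚ) * h1 - 12 * (m + 1 : ℚ) * h2

theorem b0coeff_succ_sub_b1coeff_succ (m : ℕ) :
    b0coeff (m + 1) - b1coeff (m + 1) = 144 * (6 * m - 1) * b1coeff m := by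
  linear_combination -b1coeff_succ_sub_b0coeff_succ m + 144 * one_sub_mul_b1coeff m

theorem B1evenC_mul_B0evenC_sub_B1oddC_mul_B0oddC (c : ℚ) (hc : c ≠ 0) :
    B1evenC c * B0evenC c - B1oddC c * B0oddC c = 1 := by
  have hF (m : ℕ) : b1coeff (m + 1) * c ^ (m + 1) - b0coeff (m + 1) * c ^ (m + 1) =
      (864 * c * m + 144 * c) * (b0coeff m * c ^ m) := by
    linear_combination c ^ (m + 1) * b1coeff_succ_sub_b0coeff_succ m
  have hG (m : ℕ) : b0coeff (m + 1) * c ^ (m + 1) - b1coeff (m + 1) * c ^ (m + 1) =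
      (864 * c * m + -(144 * c)) * (b1coeff m * c ^ m) := by
    linear_combination c ^ (m + 1) * b0coeff_succ_sub_b1coeff_succ m
  have h0 : b1coeff 0 * c ^ 0 = b0coeff 0 * c ^ 0 := by norm_num [b0coeff, b1coeff]
  have hEven (m : ℕ) : Even (m + 1) ↔ ¬ Even m := Nat.even_add_one
  have hOdd (m : ℕ) : ¬ Even (m + 1) ↔ Even m := by simp [Nat.even_add_one]
  refine derivative.ext ?_ ?_
  · rw [derivative_one]
    exact derivative_mul_sub_mul_eq_zero (mul_ne_zero (by norm_num) hc)
      (C_mul_X_sq_mul_derivative_mk_ite _ _ hOdd h0 hF)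
      (C_mul_X_sq_mul_derivative_mk_ite _ _ hEven h0 hF)
      (C_mul_X_sq_mul_derivative_mk_ite _ _ hOdd h0.symm hG)
      (C_mul_X_sq_mul_derivative_mk_ite _ _ hEven h0.symm hG)
  · simp [B0evenC, B1evenC, B0oddC, B1oddC, constantCoeff_mk, b0coeff, b1coeff]

/-- The adjoint with respect to `η` is `R* = η⁻¹ Rᵀ η = η Rᵀ η`. -/
theorem Rmat_symplectic (c : ℚ) (hc : c ≠ 0) :
    Rmat c * (etaMat * (RmatNeg c)ᵀ * etaMat) = 1 := by
  have hW := B1evenC_mul_B0evenC_sub_B1oddC_mul_B0oddC c hc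
  have hT : (RmatNeg c)ᵀ = !![B1evenC c, B0oddC c; B1oddC c, B0evenC c] := by
    rw [RmatNeg]
    ext i j
    fin_cases i <;> fin_cases j <;> simp
  rw [hT, Rmat, etaMat]
  simp [one_fin_two]
  exact ⟨⟨by linear_combination hW, by ring⟩, by ring, by linear_combination hW⟩
end
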